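/- For every E ∈ 𝒞ₛ (finite S-structure with ∅ ≤ₛ E) there exists an injective function f: C(E) → [E]² assigning to each maximal clique C a 2-element subset f(C) ⊆ C, with all assigned pairs distinct. -/

import Mathlib

/-!
By Hall's marriage theorem it suffices that any `k` cliques together contain at least `k`
pairs. Let `X` be the union of the `k` cliques. Each of them contributes
`pm C · (|C| - 2) ≥ 1` to the sum defining `d₀ₛ(X)`, so `d₀ₛ(X) ≥ 0` gives `k ≤ |X|`.
Since every clique has at least three points, every point of `X` lies in at least two of
the pairs, and double counting gives `|X| ≤ #pairs`.
-/

variable {α : Type*} [DecidableEq α] {β : Type*} [DecidableEq β]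

/-- `|X|* = max(0, |X| - 2)`. -/
def cardStar (X : Finset α) : ℤ := max 0 ((X.card : ℤ) - 2)

/-- An S-structure: a carrier set together with a pre-multiplicity function `pm` on
finite sets (its support being the set of declared maximal cliques, each a subset of the
carrier of size `≥ 3`, with pre-multiplicity at most 3), such that every finite set meets
only finitely many cliques in `≥ 3` points, and the associated multiplicity function
`m(D) = Σ_{D ⊆ C} pm C` satisfies the validity bound `m(D)·(|D|-2) ≤ |D|`. -/
structure SStruct (α : Type*) [DecidableEq α] where
  carrier : Set α
  pm : Finset α → ℕ
  pm_le : ∀ C, pm C ≤ 3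
  pm_supp : ∀ C, pm C ≠ 0 → ↑C ⊆ carrier ∧ 3 ≤ C.card
  finite_meets : ∀ X : Finset α, {C : Finset α | pm C ≠ 0 ∧ 3 ≤ (C ∩ X).card}.Finite
  valid : ∀ D : Finset α, 3 ≤ D.card →
    (∑ᶠ C ∈ {C : Finset α | D ⊆ C}, pm C) * (D.card - 2) ≤ D.card

/-- The S-predimension of a finite subset `X` of the ambient S-structure `N`:
`d₀ₛ(X) = |X| - Σ_C pm(C)·|C ∩ X|*` (the induced cliques on `X` are the `C ∩ X`). -/
noncomputable def d0s (N : SStruct α) (X : Finset α) : ℤ :=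
  (X.card : ℤ) - ∑ᶠ C : Finset α, (N.pm C : ℤ) * cardStar (C ∩ X)

/-- A finite subset `A` is strong (self-sufficient) in `B`: `d₀ₛ(X/A) ≥ 0` for every
finite `X ⊆ B`. -/
def FinStrongIn (N : SStruct α) (A : Finset α) (B : Set α) : Prop :=
  ↑A ⊆ B ∧ ∀ X : Finset α, ↑X ⊆ B → d0s N A ≤ d0s N (X ∪ A)

/-- `A ≤ₛ B` for arbitrary (possibly infinite) subsets `A ⊆ B` of the ambient
S-structure `N`: every finite `D ⊆ A` strong in `A` is strong in `B`. -/
def StrongIn (N : SStruct α) (A B : Set α) : Prop :=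
  A ⊆ B ∧ ∀ D : Finset α, ↑D ⊆ A → FinStrongIn N D A → FinStrongIn N D B

/-- The associated multiplicity function: `m(X) = Σ_{X ⊆ C} pm C`. -/
noncomputable def multFun (N : SStruct α) (X : Finset α) : ℕ :=
  ∑ᶠ C ∈ {C : Finset α | X ⊆ C}, N.pm C

/-- `E ∈ 𝒞ₛ`: a finite S-structure all of whose substructures have nonnegative
S-predimension (`∅ ≤ₛ E`). -/
def InCs (E : SStruct α) : Prop :=
  E.carrier.Finite ∧ ∀ X : Finset α, ↑X ⊆ E.carrier → 0 ≤ d0s E X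

open Finset

theorem two_le_card_filter_mem_powersetCard_two {C : Finset α} {v : α} (hv : v ∈ C)
    (hC : 3 ≤ #C) : 2 ≤ #{p ∈ C.powersetCard 2 | v ∈ p} := by
  have hinj : Set.InjOn (fun w => ({v, w} : Finset α)) (C.erase v) := by
    intro w hw w' hw' h
    have : w ∈ ({v, w'} : Finset α) := by simp only at h; rw [← h]; simp
    simpa [(ne_of_mem_erase hw).symm, eq_comm] using this
  calc 2 ≤ #(C.erase v) := by rw [card_erase_of_mem hv]; omega
    _ = #((C.erase v).image fun w => ({v, w} : Finset α)) := (card_image_of_injOn hinj).symm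
    _ ≤ _ := by
      refine card_le_card fun p hp => ?_
      obtain ⟨w, hw, rfl⟩ := mem_image.mp hp
      simp only [mem_filter, mem_powersetCard]
      exact ⟨⟨insert_subset hv (singleton_subset_iff.mpr (mem_of_mem_erase hw)),
        card_pair (ne_of_mem_erase hw).symm⟩, mem_insert_self v _⟩

theorem card_biUnion_le_card_biUnion_powersetCard_two (s : Finset (Finset α))
    (hs : ∀ C ∈ s, 3 ≤ #C) : #(s.biUnion id) ≤ #(s.biUnion (powersetCard 2)) := by
  have key := card_mul_le_card_mul (s := s.biUnion id) (t := s.biUnion (powersetCard 2))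
    (· ∈ ·) (m := 2) (n := 2) ?_ ?_
  · omega
  · intro v hv
    obtain ⟨C, hC, hvC⟩ := mem_biUnion.mp hv
    refine (two_le_card_filter_mem_powersetCard_two hvC (hs C hC)).trans (card_le_card ?_)
    exact filter_subset_filter _ (subset_biUnion_of_mem (powersetCard 2) hC)
  · intro p hp
    obtain ⟨C, hC, hpC⟩ := mem_biUnion.mp hp
    rw [mem_powersetCard] at hpC
    calc #(bipartiteBelow (· ∈ ·) (s.biUnion id) p) ≤ #p :=
          card_le_card fun v hv => (mem_filter.mp hv).2
      _ = 2 := hpC.2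

theorem SStruct.finite_support_pm_mul_cardStar (N : SStruct α) (X : Finset α) :
    (Function.support fun C => (N.pm C : ℤ) * cardStar (C ∩ X)).Finite := by
  refine (N.finite_meets X).subset fun C hC => ?_
  simp only [Function.mem_support, ne_eq, mul_eq_zero, not_or, cardStar] at hC
  exact ⟨fun h => hC.1 (by exact_mod_cast h), by omega⟩

theorem SStruct.card_cliques_le_of_d0s_nonneg (N : SStruct α) {X : Finset α}
    (hX : 0 ≤ d0s N X) (s : Finset (Finset α)) (hs : ∀ C ∈ s, N.pm C ≠ 0 ∧ C ⊆ X) :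
    #s ≤ #X := by
  set f := fun C => (N.pm C : ℤ) * cardStar (C ∩ X)
  have hf : Function.support f ⊆ ↑(s ∪ (N.finite_support_pm_mul_cardStar X).toFinset) :=
    fun C hC => mem_coe.mpr (mem_union_right _ ((Set.Finite.mem_toFinset _).mpr hC))
  have hone : ∀ C ∈ s, 1 ≤ f C := by
    intro C hC
    obtain ⟨hpm, hCX⟩ := hs C hC
    have h3 := (N.pm_supp C hpm).2
    have hpm' : (1 : ℤ) ≤ N.pm C := by omega
    have hstar : (1 : ℤ) ≤ cardStar (C ∩ X) := by
      rw [inter_eq_left.mpr hCX, cardStar]; omega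
    nlinarith
  have hsum : (#s : ℤ) ≤ ∑ᶠ C, f C :=
    calc (#s : ℤ) = ∑ _C ∈ s, (1 : ℤ) := by simp
      _ ≤ ∑ C ∈ s, f C := sum_le_sum hone
      _ ≤ ∑ C ∈ s ∪ (N.finite_support_pm_mul_cardStar X).toFinset, f C :=
          sum_le_sum_of_subset_of_nonneg subset_union_left fun C _ _ =>
            mul_nonneg (by positivity) (le_max_left _ _)
      _ = ∑ᶠ C, f C := (finsum_eq_sum_of_support_subset f hf).symm
  have hd0s : d0s N X = #X - ∑ᶠ C, f C := rfl
  omega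

theorem SStruct.card_le_card_biUnion_powersetCard_two (N : SStruct α) (s : Finset (Finset α))
    (hs : ∀ C ∈ s, N.pm C ≠ 0) (hd : 0 ≤ d0s N (s.biUnion id)) :
    #s ≤ #(s.biUnion (powersetCard 2)) :=
  calc #s ≤ #(s.biUnion id) :=
        N.card_cliques_le_of_d0s_nonneg hd s fun C hC => ⟨hs C hC, subset_biUnion_of_mem id hC⟩
    _ ≤ _ := card_biUnion_le_card_biUnion_powersetCard_two s fun C hC => (N.pm_supp C (hs C hC)).2

/-- for every `E ∈ 𝒞ₛ` there is an injective assignment of a 2-element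
subset `f C ⊆ C` to each maximal clique `C` of `E`. -/
theorem stmt17 (E : SStruct α) (hE : InCs E) :
    ∃ f : Finset α → Finset α,
      Set.InjOn f {C : Finset α | E.pm C ≠ 0} ∧
      ∀ C : Finset α, E.pm C ≠ 0 → f C ⊆ C ∧ (f C).card = 2 := by
  have hall : ∀ s : Finset {C : Finset α // E.pm C ≠ 0},
      #s ≤ #(s.biUnion fun C => C.1.powersetCard 2) := by
    intro s
    have hs : ∀ C ∈ s.image Subtype.val, E.pm C ≠ 0 := by
      simp only [mem_image]; rintro _ ⟨C, -, rfl⟩; exact C.2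
    have hcarrier : ↑((s.image Subtype.val).biUnion id) ⊆ E.carrier := by
      simp only [coe_biUnion, Set.iUnion_subset_iff]
      exact fun C hC => (E.pm_supp C (hs C hC)).1
    have := E.card_le_card_biUnion_powersetCard_two _ hs (hE.2 _ hcarrier)
    rwa [card_image_of_injective _ Subtype.val_injective, image_biUnion] at this
  obtain ⟨f, hf_inj, hf_mem⟩ := (all_card_le_biUnion_card_iff_exists_injective _).mp hall
  refine ⟨fun C => if h : E.pm C ≠ 0 then f ⟨C, h⟩ else ∅, ?_, fun C hC => ?_⟩
  · intro C hC D hD h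
    simp only [Set.mem_ofPred_eq] at hC hD
    simp only [dif_pos hC, dif_pos hD] at h
    exact congrArg Subtype.val (hf_inj h)
  · simpa only [dif_pos hC, mem_powersetCard] using hf_mem ⟨C, hC⟩
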